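/- arXiv:math/0511513 — 6 statements merged into one kernel-verified Lean document; each statement's English description precedes it below -/
import Mathlib

section
/- If nanowords v and w over an alphabet α with involution τ are cobordant (related by a finite sequence of isomorphisms, homotopy moves, surgeries, and inverse moves), then their opposites v⁻ and w⁻ (obtained by reversing the order of letters) are also cobordant. -/
/-! Nanowords over an alphabet `α` with involution `τ`, following Turaev.
A letter is a pair (id, α-value); a nanoword is a word in which every letter id
occurs exactly twice, with a well-defined α-value. -/

/-- A letter of an `α`-alphabet: an identifier together with its projection to `α`. -/
abbrev Letter (α : Type) := ℕ × α

/-- `w` is a nanoword: each occurring letter id occurs exactly twice and determines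
its `α`-value. -/
def IsNanoword {α : Type} (w : List (Letter α)) : Prop :=
  (∀ p ∈ w, (w.filter fun q => q.1 == p.1).length = 2) ∧
  ∀ p ∈ w, ∀ q ∈ w, p.1 = q.1 → p.2 = q.2

/-- The set of letter ids occurring in a word. -/
def lettersOf {α : Type} (w : List (Letter α)) : Set ℕ := {n | ∃ a, (n, a) ∈ w}

/-- `splice [x₁,…,x_{k+1}] [v₁,…,v_k] = x₁ v₁ x₂ v₂ ⋯ x_k v_k x_{k+1}`:
the nanoword with a factor `(v₁|⋯|v_k)`. -/
def splice {α : Type} : List (List (Letter α)) → List (List (Letter α)) → List (Letter α)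
  | [], _ => []
  | x :: xs, [] => x ++ splice xs []
  | x :: xs, v :: vs => x ++ v ++ splice xs vs

/-- The nanophrase `vs = (v₁|⋯|v_k)` is symmetric: there is `ι` with `ι ∘ vᵣ = vᵣ⁻`
for all `r`, and `|ι B| = τ^{ε B} |B|` where `ε B = 0` iff both occurrences of `B`
lie in the same word of `vs`. -/
def IsSymPhrase {α : Type} (τ : α → α) (vs : List (List (Letter α))) : Prop :=
  ∃ ι : Letter α → Letter α,
    (∀ v ∈ vs, v.map ι = v.reverse) ∧
    ∀ B ∈ vs.flatten,
      ((∃ v ∈ vs, (v.filter fun q => q.1 == B.1).length = 2) → (ι B).2 = B.2) ∧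
      ((¬ ∃ v ∈ vs, (v.filter fun q => q.1 == B.1).length = 2) → (ι B).2 = τ B.2)

/-- The nanophrase is even: every constituent word has even length. -/
def IsEvenPhrase {α : Type} (vs : List (List (Letter α))) : Prop :=
  ∀ v ∈ vs, Even v.length

/-- The moves (TR): isomorphisms, the three homotopy moves, and surgeries. -/
inductive NanoMove {α : Type} (τ : α → α) : List (Letter α) → List (Letter α) → Prop
  | iso (w : List (Letter α)) (f : ℕ → ℕ) (hf : Function.Injective f)
      (hw : IsNanoword w) :
      NanoMove τ w (w.map fun p => (f p.1, p.2))
  | h1 (x y : List (Letter α)) (A : Letter α)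
      (hw : IsNanoword (x ++ [A, A] ++ y)) :
      NanoMove τ (x ++ [A, A] ++ y) (x ++ y)
  | h2 (x y z : List (Letter α)) (A B : Letter α) (hAB : B.2 = τ A.2)
      (hw : IsNanoword (x ++ [A, B] ++ y ++ [B, A] ++ z)) :
      NanoMove τ (x ++ [A, B] ++ y ++ [B, A] ++ z) (x ++ y ++ z)
  | h3 (x y z t : List (Letter α)) (A B C : Letter α)
      (hAB : A.2 = B.2) (hBC : B.2 = C.2)
      (hw : IsNanoword (x ++ [A, B] ++ y ++ [A, C] ++ z ++ [B, C] ++ t)) :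
      NanoMove τ (x ++ [A, B] ++ y ++ [A, C] ++ z ++ [B, C] ++ t)
                 (x ++ [B, A] ++ y ++ [C, A] ++ z ++ [C, B] ++ t)
  | surgery (xs vs : List (List (Letter α))) (hlen : xs.length = vs.length + 1)
      (hsym : IsSymPhrase τ vs) (heven : IsEvenPhrase vs)
      (hw : IsNanoword (splice xs vs)) :
      NanoMove τ (splice xs vs) xs.flatten

/-- Cobordism: the equivalence relation generated by the moves (TR). -/
def Cobordant {α : Type} (τ : α → α) : List (Letter α) → List (Letter α) → Prop :=
  Relation.EqvGen (NanoMove τ)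


lemma isNanoword_reverse {α : Type} {w : List (Letter α)} (h : IsNanoword w) :
    IsNanoword w.reverse := by
  obtain ⟨h1, h2⟩ := h
  refine ⟨fun p hp => ?_, fun p hp q hq => h2 p (List.mem_reverse.1 hp) q (List.mem_reverse.1 hq)⟩
  rw [List.filter_reverse, List.length_reverse]
  exact h1 p (List.mem_reverse.1 hp)

lemma splice_append_last {α : Type} (A B : List (List (Letter α)))
    (x v : List (Letter α)) (h : A.length = B.length + 1) :
    splice (A ++ [x]) (B ++ [v]) = splice A B ++ v ++ x := by
  induction A generalizing B with
  | nil => simp at h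
  | cons a A ih =>
    cases B with
    | nil =>
      have hA : A = [] := by simpa using h
      subst hA
      simp [splice]
    | cons b B =>
      simp only [List.cons_append, splice, List.append_eq]
      rw [ih B (by simpa using h)]
      simp [List.append_assoc]

lemma splice_reverse {α : Type} (xs vs : List (List (Letter α)))
    (h : xs.length = vs.length + 1) :
    (splice xs vs).reverse
      = splice ((xs.map List.reverse).reverse) ((vs.map List.reverse).reverse) := by
  induction vs generalizing xs with
  | nil =>
    match xs, h with
    | [x], _ => simp [splice]
  | cons v vs ih =>
    match xs, h with
    | x :: xs, h =>
      have h' : xs.length = vs.length + 1 := by simpa using h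
      simp only [splice, List.map_cons, List.reverse_cons]
      rw [splice_append_last _ _ _ _ (by simp [h'])]
      rw [← ih xs h']
      simp

lemma flatten_reverse_map {α : Type} (xs : List (List (Letter α))) :
    ((xs.map List.reverse).reverse).flatten = xs.flatten.reverse := by
  induction xs with
  | nil => simp
  | cons x xs ih => simp [ih]

lemma isSymPhrase_reverse {α : Type} (τ : α → α) {vs : List (List (Letter α))}
    (h : IsSymPhrase τ vs) : IsSymPhrase τ ((vs.map List.reverse).reverse) := by
  obtain ⟨ι, h1, h2⟩ := h
  have hmem : ∀ B : Letter α,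
      ((∃ v ∈ (vs.map List.reverse).reverse, (v.filter fun q => q.1 == B.1).length = 2) ↔
        (∃ v ∈ vs, (v.filter fun q => q.1 == B.1).length = 2)) := by
    intro B
    constructor
    · rintro ⟨v, hv, hfl⟩
      rw [List.mem_reverse, List.mem_map] at hv
      obtain ⟨u, hu, rfl⟩ := hv
      exact ⟨u, hu, by rwa [List.filter_reverse, List.length_reverse] at hfl⟩
    · rintro ⟨u, hu, hfl⟩
      refine ⟨u.reverse, ?_, by rwa [List.filter_reverse, List.length_reverse]⟩
      rw [List.mem_reverse, List.mem_map]
      exact ⟨u, hu, rfl⟩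
  refine ⟨ι, ?_, ?_⟩
  · intro v hv
    rw [List.mem_reverse, List.mem_map] at hv
    obtain ⟨u, hu, rfl⟩ := hv
    rw [List.map_reverse, h1 u hu, List.reverse_reverse]
  · intro B hB
    have hB' : B ∈ vs.flatten := by
      rw [flatten_reverse_map, List.mem_reverse] at hB
      exact hB
    exact ⟨fun hx => (h2 B hB').1 ((hmem B).1 hx),
      fun hx => (h2 B hB').2 (fun hy => hx ((hmem B).2 hy))⟩

lemma nanoMove_reverse {α : Type} (τ : α → α) {a b : List (Letter α)}
    (h : NanoMove τ a b) : NanoMove τ a.reverse b.reverse := by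
  cases h with
  | iso u f hf hu =>
    rw [← List.map_reverse]
    exact NanoMove.iso _ f hf (isNanoword_reverse hu)
  | h1 x y A hw =>
    have key : NanoMove τ (y.reverse ++ [A, A] ++ x.reverse) (y.reverse ++ x.reverse) := by
      refine NanoMove.h1 _ _ _ ?_
      have := isNanoword_reverse hw
      have e : (x ++ [A, A] ++ y).reverse = y.reverse ++ [A, A] ++ x.reverse := by simp
      rwa [e] at this
    have e1 : (x ++ [A, A] ++ y).reverse = y.reverse ++ [A, A] ++ x.reverse := by simp
    have e2 : (x ++ y).reverse = y.reverse ++ x.reverse := by simp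
    rw [e1, e2]; exact key
  | h2 x y z A B hAB hw =>
    have e1 : (x ++ [A, B] ++ y ++ [B, A] ++ z).reverse
        = z.reverse ++ [A, B] ++ y.reverse ++ [B, A] ++ x.reverse := by simp
    have e2 : (x ++ y ++ z).reverse = z.reverse ++ y.reverse ++ x.reverse := by simp
    rw [e1, e2]
    exact NanoMove.h2 _ _ _ _ _ hAB (e1 ▸ isNanoword_reverse hw)
  | h3 x y z t A B C hAB hBC hw =>
    have e1 : (x ++ [A, B] ++ y ++ [A, C] ++ z ++ [B, C] ++ t).reverse
        = t.reverse ++ [C, B] ++ z.reverse ++ [C, A] ++ y.reverse ++ [B, A] ++ x.reverse := by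
      simp
    have e2 : (x ++ [B, A] ++ y ++ [C, A] ++ z ++ [C, B] ++ t).reverse
        = t.reverse ++ [B, C] ++ z.reverse ++ [A, C] ++ y.reverse ++ [A, B] ++ x.reverse := by
      simp
    rw [e1, e2]
    exact NanoMove.h3 t.reverse z.reverse y.reverse x.reverse C B A
      (by rw [hBC]) (by rw [hAB]) (e1 ▸ isNanoword_reverse hw)
  | surgery xs vs hlen hsym heven hw =>
    have e1 : (splice xs vs).reverse
        = splice ((xs.map List.reverse).reverse) ((vs.map List.reverse).reverse) :=
      splice_reverse xs vs hlen
    have e2 : xs.flatten.reverse = ((xs.map List.reverse).reverse).flatten :=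
      (flatten_reverse_map xs).symm
    rw [e1, e2]
    exact NanoMove.surgery _ _ (by simp [hlen]) (isSymPhrase_reverse τ hsym)
      (by intro v hv
          rw [List.mem_reverse, List.mem_map] at hv
          obtain ⟨u, hu, rfl⟩ := hv
          simpa using heven u hu)
      (e1 ▸ isNanoword_reverse hw)

/-- If nanowords `v` and `w` are cobordant, then so are their
opposites `v⁻` and `w⁻`. -/
theorem cobordant_reverse {α : Type} (τ : α → α) (v w : List (Letter α))
    (hv : IsNanoword v) (hw : IsNanoword w) (h : Cobordant τ v w) :
    Cobordant τ v.reverse w.reverse := by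
  clear hv hw
  induction h with
  | rel a b hab => exact Relation.EqvGen.rel _ _ (nanoMove_reverse τ hab)
  | refl a => exact Relation.EqvGen.refl _
  | symm a b _ ih => exact Relation.EqvGen.symm _ _ ih
  | trans a b c _ _ ih1 ih2 => exact Relation.EqvGen.trans _ _ _ ih1 ih2
end

section
/- Cobordism of nanowords is compatible with concatenation: if v₁ is cobordant to v₂ and w₁ is cobordant to w₂, then the concatenation v₁w₁ is cobordant to v₂w₂. -/
/-!
A move applied to a factor `a` of a word `u a w` is still a move, provided the letters of `u` and
`w` are disjoint from those of `a` and of the result: an isomorphism of `a` extends by the identity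
on the context, and for a surgery the context is absorbed into the outer factors. The words met
along a cobordism `a ~ b` may reuse letters of `u` and `w`, so the context is first renamed
(an isomorphism) beyond all of them, the moves are performed, and the context is renamed back.
For `v₁ w₁ ~ v₂ w₂`, rename `w₁` away from `v₁` and `v₂`, then move `v₁` to `v₂` and `w₁` to `w₂`.
-/

open Set Function Relation

theorem Nat.exists_injective_eqOn {f : ℕ → ℕ} {s : Set ℕ} (hs : s.Finite) (hf : InjOn f s) :
    ∃ g : ℕ → ℕ, Injective g ∧ EqOn g f s := by
  classical
  obtain ⟨M, hM⟩ := (hs.image f).bddAbove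
  have hlt : ∀ n ∈ s, f n < M + 1 := fun n hn => Nat.lt_succ_of_le (hM (mem_image_of_mem f hn))
  refine ⟨fun n => if n ∈ s then f n else n + (M + 1), fun m n hmn => ?_,
    fun n hn => if_pos hn⟩
  by_cases hm : m ∈ s <;> by_cases hn : n ∈ s <;> simp only [hm, hn, if_true, if_false] at hmn
  · exact hf hm hn hmn
  · have := hlt m hm; omega
  · have := hlt n hn; omega
  · omega

section

variable {α : Type}

def relabel (f : ℕ → ℕ) (w : List (Letter α)) : List (Letter α) :=
  w.map fun p => (f p.1, p.2)

@[simp] theorem relabel_nil (f : ℕ → ℕ) : relabel f ([] : List (Letter α)) = [] := rfl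

@[simp] theorem relabel_append (f : ℕ → ℕ) (v w : List (Letter α)) :
    relabel f (v ++ w) = relabel f v ++ relabel f w :=
  List.map_append

theorem fst_mem_lettersOf {w : List (Letter α)} {p : Letter α} (hp : p ∈ w) :
    p.1 ∈ lettersOf w :=
  ⟨p.2, hp⟩

@[simp] theorem lettersOf_nil : lettersOf ([] : List (Letter α)) = ∅ := by
  ext; simp [lettersOf]

@[simp] theorem lettersOf_append (v w : List (Letter α)) :
    lettersOf (v ++ w) = lettersOf v ∪ lettersOf w := by
  ext; simp [lettersOf, exists_or]

theorem lettersOf_relabel (f : ℕ → ℕ) (w : List (Letter α)) :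
    lettersOf (relabel f w) = f '' lettersOf w := by
  ext n
  simp only [lettersOf, relabel, List.mem_map, Prod.mk.injEq, mem_image, mem_ofPred_eq]
  exact ⟨fun ⟨_, p, hp, hn, _⟩ => ⟨p.1, ⟨p.2, hp⟩, hn⟩,
    fun ⟨m, ⟨a, ha⟩, hn⟩ => ⟨a, (m, a), ha, hn, rfl⟩⟩

theorem lettersOf_finite (w : List (Letter α)) : (lettersOf w).Finite := by
  have : lettersOf w = Prod.fst '' {p | p ∈ w} := by ext; simp [lettersOf]
  exact this ▸ (List.finite_toSet w).image _

theorem exists_lettersOf_subset_Iio (w : List (Letter α)) : ∃ K, lettersOf w ⊆ Iio K := by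
  obtain ⟨M, hM⟩ := (lettersOf_finite w).bddAbove
  exact ⟨M + 1, fun n hn => Nat.lt_succ_of_le (hM hn)⟩

theorem lettersOf_relabel_add_subset (K : ℕ) (w : List (Letter α)) :
    lettersOf (relabel (· + K) w) ⊆ Ici K := by
  rw [lettersOf_relabel]
  rintro _ ⟨n, -, rfl⟩
  exact Nat.le_add_left K n

theorem relabel_congr {f g : ℕ → ℕ} {w : List (Letter α)} (h : EqOn f g (lettersOf w)) :
    relabel f w = relabel g w :=
  List.map_congr_left fun p hp => by rw [h (fst_mem_lettersOf hp)]

theorem relabel_eq_self {f : ℕ → ℕ} {w : List (Letter α)} (h : EqOn f id (lettersOf w)) :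
    relabel f w = w :=
  (relabel_congr h).trans (List.map_id' w)

theorem IsNanoword.nil : IsNanoword ([] : List (Letter α)) := by
  constructor <;> simp

theorem IsNanoword.append {v w : List (Letter α)} (hv : IsNanoword v) (hw : IsNanoword w)
    (hd : Disjoint (lettersOf v) (lettersOf w)) : IsNanoword (v ++ w) := by
  have hfilter : ∀ {x y : List (Letter α)}, Disjoint (lettersOf x) (lettersOf y) →
      ∀ p ∈ x, y.filter (fun q => q.1 == p.1) = [] := fun hd p hp => by
    refine List.filter_eq_nil_iff.2 fun q hq hqp => ?_
    exact hd.ne_of_mem (fst_mem_lettersOf hp) (fst_mem_lettersOf hq) (eq_of_beq hqp).symm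
  refine ⟨fun p hp => ?_, fun p hp q hq hpq => ?_⟩
  · rw [List.filter_append]
    rcases List.mem_append.1 hp with hp | hp
    · simp [hfilter hd p hp, hv.1 p hp]
    · simp [hfilter hd.symm p hp, hw.1 p hp]
  · rcases List.mem_append.1 hp with hp | hp <;> rcases List.mem_append.1 hq with hq | hq
    · exact hv.2 p hp q hq hpq
    · exact absurd hpq (hd.ne_of_mem (fst_mem_lettersOf hp) (fst_mem_lettersOf hq))
    · exact absurd hpq.symm (hd.ne_of_mem (fst_mem_lettersOf hq) (fst_mem_lettersOf hp))
    · exact hw.2 p hp q hq hpq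

theorem IsNanoword.relabel {f : ℕ → ℕ} {w : List (Letter α)} (hw : IsNanoword w)
    (hf : InjOn f (lettersOf w)) : IsNanoword (relabel f w) := by
  refine ⟨fun p hp => ?_, fun p hp q hq hpq => ?_⟩
  · obtain ⟨p, hp', rfl⟩ := List.mem_map.1 hp
    rw [_root_.relabel, List.filter_map, List.length_map, ← hw.1 p hp']
    congr 1
    refine List.filter_congr fun q hq => ?_
    simp only [comp_apply]
    exact decide_eq_decide.2 (hf.eq_iff (fst_mem_lettersOf hq) (fst_mem_lettersOf hp'))
  · obtain ⟨p, hp', rfl⟩ := List.mem_map.1 hp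
    obtain ⟨q, hq', rfl⟩ := List.mem_map.1 hq
    exact hw.2 p hp' q hq' (hf (fst_mem_lettersOf hp') (fst_mem_lettersOf hq') hpq)

theorem IsNanoword.append_append {u x w : List (Letter α)} (hx : IsNanoword x)
    (hu : IsNanoword u) (hw : IsNanoword w) (huw : Disjoint (lettersOf u) (lettersOf w))
    (hx' : Disjoint (lettersOf (u ++ w)) (lettersOf x)) : IsNanoword (u ++ x ++ w) := by
  rw [lettersOf_append, disjoint_union_left] at hx'
  refine (hu.append hx hx'.1).append hw ?_
  rw [lettersOf_append, disjoint_union_left]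
  exact ⟨huw, hx'.2.symm⟩

theorem exists_splice_eq_append_append {xs vs : List (List (Letter α))}
    (h : xs.length = vs.length + 1) (u w : List (Letter α)) :
    ∃ ys, ys.length = vs.length + 1 ∧ splice ys vs = u ++ splice xs vs ++ w ∧
      ys.flatten = u ++ xs.flatten ++ w := by
  induction vs generalizing xs u with
  | nil =>
    obtain ⟨x, rfl⟩ := List.length_eq_one_iff.1 h
    exact ⟨[u ++ x ++ w], rfl, by simp [splice], by simp⟩
  | cons v vs ih =>
    obtain ⟨x, xs, rfl⟩ := List.exists_cons_of_length_eq_add_one h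
    obtain ⟨ys, hys, hsplice, hflat⟩ := ih (Nat.succ.inj h) []
    refine ⟨(u ++ x) :: ys, by simp [hys], ?_, by simp [hflat]⟩
    simp [splice, hsplice]

variable {τ : α → α}

theorem NanoMove.isNanoword_left {a b : List (Letter α)} (m : NanoMove τ a b) :
    IsNanoword a := by
  cases m <;> assumption

theorem NanoMove.relabel_of_injOn {f : ℕ → ℕ} {w : List (Letter α)} (hw : IsNanoword w)
    (hf : InjOn f (lettersOf w)) : NanoMove τ w (relabel f w) := by
  obtain ⟨g, hg, hgf⟩ := Nat.exists_injective_eqOn (lettersOf_finite w) hf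
  rw [← relabel_congr hgf]
  exact NanoMove.iso w g hg hw

theorem NanoMove.relabel_add_around {u a w : List (Letter α)} {K : ℕ}
    (h : IsNanoword (u ++ a ++ w)) (hd : Disjoint (lettersOf (u ++ w)) (lettersOf a))
    (ha : lettersOf a ⊆ Iio K) :
    NanoMove τ (u ++ a ++ w) (relabel (· + K) u ++ a ++ relabel (· + K) w) := by
  classical
  let f : ℕ → ℕ := fun n => if n ∈ lettersOf a then n else n + K
  have hf : Injective f := fun m n hmn => by
    by_cases hm : m ∈ lettersOf a <;> by_cases hn : n ∈ lettersOf a <;>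
      simp only [f, hm, hn, if_true, if_false] at hmn
    · exact hmn
    · have : m < K := ha hm; omega
    · have : n < K := ha hn; omega
    · omega
  have hfa : EqOn f id (lettersOf a) := fun n hn => if_pos hn
  have hfK : EqOn f (· + K) (lettersOf u ∪ lettersOf w) := fun n hn =>
    if_neg (hd.notMem_of_mem_left (by rwa [lettersOf_append]))
  have hmove : NanoMove τ (u ++ a ++ w) (relabel f (u ++ a ++ w)) := NanoMove.iso _ f hf h
  rwa [relabel_append, relabel_append, relabel_eq_self hfa,
    relabel_congr (hfK.mono subset_union_left), relabel_congr (hfK.mono subset_union_right)]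
    at hmove

theorem NanoMove.append_append {a b u w : List (Letter α)} (m : NanoMove τ a b)
    (hu : IsNanoword u) (hw : IsNanoword w) (huw : Disjoint (lettersOf u) (lettersOf w))
    (ha : Disjoint (lettersOf (u ++ w)) (lettersOf a))
    (hb : Disjoint (lettersOf (u ++ w)) (lettersOf b)) :
    NanoMove τ (u ++ a ++ w) (u ++ b ++ w) := by
  have hctx := m.isNanoword_left.append_append hu hw huw ha
  cases m with
  | iso a f hf _ =>
    classical
    change Disjoint _ (lettersOf (relabel f a)) at hb
    let f' : ℕ → ℕ := fun n => if n ∈ lettersOf a then f n else n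
    have hf'a : EqOn f' f (lettersOf a) := fun n hn => if_pos hn
    have hf'uw : EqOn f' id (lettersOf (u ++ w)) := fun n hn => if_neg (ha.notMem_of_mem_left hn)
    have hf' : InjOn f' (lettersOf (u ++ a ++ w)) := by
      have e : lettersOf (u ++ a ++ w) = lettersOf a ∪ lettersOf (u ++ w) := by
        simp only [lettersOf_append]; ext; simp only [mem_union]; tauto
      rw [e, injOn_union ha.symm, hf'a.injOn_iff, hf'uw.injOn_iff]
      refine ⟨hf.injOn, injective_id.injOn, fun m hm n hn hmn => ?_⟩
      rw [hf'a hm, hf'uw hn] at hmn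
      exact hb.ne_of_mem hn (lettersOf_relabel f a ▸ mem_image_of_mem f hm) hmn.symm
    have hmove := NanoMove.relabel_of_injOn (τ := τ) hctx hf'
    rw [lettersOf_append] at hf'uw
    rwa [relabel_append, relabel_append, relabel_congr hf'a,
      relabel_eq_self (hf'uw.mono subset_union_left),
      relabel_eq_self (hf'uw.mono subset_union_right)] at hmove
  | h1 x y A =>
    simpa using NanoMove.h1 (τ := τ) (u ++ x) (y ++ w) A (by simpa using hctx)
  | h2 x y z A B hAB =>
    simpa using NanoMove.h2 (u ++ x) y (z ++ w) A B hAB (by simpa using hctx)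
  | h3 x y z t A B C hAB hBC =>
    simpa using NanoMove.h3 (τ := τ) (u ++ x) y z (t ++ w) A B C hAB hBC (by simpa using hctx)
  | surgery xs vs hlen hsym heven _ =>
    obtain ⟨ys, hys, hsplice, hflat⟩ := exists_splice_eq_append_append hlen u w
    rw [← hsplice, ← hflat]
    exact .surgery ys vs hys hsym heven (hsplice ▸ hctx)

theorem NanoMove.cobordant {a b : List (Letter α)} (m : NanoMove τ a b) : Cobordant τ a b :=
  EqvGen.rel _ _ m

theorem Cobordant.symm {a b : List (Letter α)} (h : Cobordant τ a b) : Cobordant τ b a :=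
  EqvGen.symm _ _ h

theorem Cobordant.trans {a b c : List (Letter α)} (h : Cobordant τ a b) (h' : Cobordant τ b c) :
    Cobordant τ a c :=
  EqvGen.trans _ _ _ h h'

instance : Trans (Cobordant τ) (Cobordant τ) (Cobordant τ) :=
  ⟨Cobordant.trans⟩

/-- The intermediate words of a chain of moves may share letters with the context; a context
whose letters are all at least `N` avoids every one of them. -/
theorem exists_forall_cobordant_append_append {a b : List (Letter α)}
    (h : ReflTransGen (SymmGen (NanoMove τ)) a b) :
    ∃ N, ∀ u w, IsNanoword u → IsNanoword w → Disjoint (lettersOf u) (lettersOf w) →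
      lettersOf (u ++ w) ⊆ Ici N → Cobordant τ (u ++ a ++ w) (u ++ b ++ w) := by
  induction h with
  | refl => exact ⟨0, fun u w _ _ _ _ => EqvGen.refl _⟩
  | @tail b c _ hbc ih =>
    obtain ⟨N, hN⟩ := ih
    obtain ⟨K, hK⟩ := exists_lettersOf_subset_Iio (b ++ c)
    rw [lettersOf_append, union_subset_iff] at hK
    refine ⟨N + K, fun u w hu hw huw huwN => ?_⟩
    have hfresh : ∀ {x : List (Letter α)}, lettersOf x ⊆ Iio K →
        Disjoint (lettersOf (u ++ w)) (lettersOf x) := fun hx =>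
      (Iio_disjoint_Ici le_rfl).symm.mono (huwN.trans (Ici_subset_Ici.2 (Nat.le_add_left K N))) hx
    refine (hN u w hu hw huw (huwN.trans (Ici_subset_Ici.2 (Nat.le_add_right N K)))).trans ?_
    rcases hbc with m | m
    · exact (m.append_append hu hw huw (hfresh hK.1) (hfresh hK.2)).cobordant
    · exact (m.append_append hu hw huw (hfresh hK.2) (hfresh hK.1)).cobordant.symm

theorem Cobordant.append_append {a b u w : List (Letter α)} (h : Cobordant τ a b)
    (ha : IsNanoword a) (hb : IsNanoword b) (hu : IsNanoword u) (hw : IsNanoword w)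
    (huw : Disjoint (lettersOf u) (lettersOf w))
    (hua : Disjoint (lettersOf (u ++ w)) (lettersOf a))
    (hub : Disjoint (lettersOf (u ++ w)) (lettersOf b)) :
    Cobordant τ (u ++ a ++ w) (u ++ b ++ w) := by
  rw [Cobordant, ← EqvGen.reflTransGen_symmGen] at h
  obtain ⟨N, hN⟩ := exists_forall_cobordant_append_append h
  obtain ⟨K, hK⟩ := exists_lettersOf_subset_Iio (a ++ b)
  rw [lettersOf_append, union_subset_iff] at hK
  have hshift : Injective (· + (N + K)) := add_left_injective _
  have hN' : lettersOf (relabel (· + (N + K)) u ++ relabel (· + (N + K)) w) ⊆ Ici N := by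
    simp only [lettersOf_append, union_subset_iff]
    exact ⟨(lettersOf_relabel_add_subset _ u).trans (Ici_subset_Ici.2 (Nat.le_add_right N K)),
      (lettersOf_relabel_add_subset _ w).trans (Ici_subset_Ici.2 (Nat.le_add_right N K))⟩
  have hKN : Iio K ⊆ Iio (N + K) := Iio_subset_Iio (Nat.le_add_left K N)
  calc Cobordant τ (u ++ a ++ w) (relabel (· + (N + K)) u ++ a ++ relabel (· + (N + K)) w) :=
        (NanoMove.relabel_add_around (ha.append_append hu hw huw hua) hua
          (hK.1.trans hKN)).cobordant
    Cobordant τ _ (relabel (· + (N + K)) u ++ b ++ relabel (· + (N + K)) w) :=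
        hN _ _ (hu.relabel hshift.injOn) (hw.relabel hshift.injOn)
          (by rwa [lettersOf_relabel, lettersOf_relabel, disjoint_image_iff hshift]) hN'
    Cobordant τ _ (u ++ b ++ w) :=
        (NanoMove.relabel_add_around (hb.append_append hu hw huw hub) hub
          (hK.2.trans hKN)).cobordant.symm

end

/-- Cobordism is compatible with concatenation. -/
theorem cobordant_append {α : Type} (τ : α → α)
    (v₁ v₂ w₁ w₂ : List (Letter α))
    (hv₁ : IsNanoword v₁) (hv₂ : IsNanoword v₂)
    (hw₁ : IsNanoword w₁) (hw₂ : IsNanoword w₂)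
    (hd₁ : Disjoint (lettersOf v₁) (lettersOf w₁))
    (hd₂ : Disjoint (lettersOf v₂) (lettersOf w₂))
    (h : Cobordant τ v₁ v₂) (h' : Cobordant τ w₁ w₂) :
    Cobordant τ (v₁ ++ w₁) (v₂ ++ w₂) := by
  obtain ⟨K, hK⟩ := exists_lettersOf_subset_Iio (v₁ ++ v₂)
  rw [lettersOf_append, union_subset_iff] at hK
  have hshift : Injective (· + K) := add_left_injective K
  have hw₁' : IsNanoword (relabel (· + K) w₁) := hw₁.relabel hshift.injOn
  have hfresh : ∀ {v : List (Letter α)}, lettersOf v ⊆ Iio K →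
      Disjoint (lettersOf v) (lettersOf (relabel (· + K) w₁)) := fun hv =>
    (Iio_disjoint_Ici le_rfl).mono hv (lettersOf_relabel_add_subset K w₁)
  have hw₁w₂ : Cobordant τ (relabel (· + K) w₁) w₂ :=
    (NanoMove.relabel_of_injOn hw₁ hshift.injOn).cobordant.symm.trans h'
  calc Cobordant τ (v₁ ++ w₁) (v₁ ++ relabel (· + K) w₁) := by
        simpa using (NanoMove.relabel_add_around (τ := τ) (u := [])
          (by simpa using hv₁.append hw₁ hd₁) (by simpa using hd₁.symm) hK.1).cobordant
    Cobordant τ _ (v₂ ++ relabel (· + K) w₁) := by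
        simpa using h.append_append hv₁ hv₂ IsNanoword.nil hw₁' (by simp)
          (by simpa using (hfresh hK.1).symm) (by simpa using (hfresh hK.2).symm)
    Cobordant τ _ (v₂ ++ w₂) := by
        simpa using hw₁w₂.append_append hw₁' hw₂ hv₂ IsNanoword.nil (by simp)
          (by simpa using hfresh hK.2) (by simpa using hd₂)
end

section
/- Let α be an alphabet with involution τ and let Π be the group generated by {z_a}_{a∈α} with relations z_a z_{τ(a)} = 1. Suppose a, b ∈ α lie in different orbits of τ, and similarly a', b' ∈ α lie in different orbits of τ. If z_a z_b z_a^{-1} z_b^{-1} = z_{a'} z_{b'} z_{a'}^{-1} z_{b'}^{-1} in Π, then a = a' and b = b'. -/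
/-!
`Π` acts on the reduced words, those in which no letter `x` is followed by `τ x`: the generator
`z_a` prepends `a`, cancelling a leading `τ a`. Acting on the empty word recovers a reduced word
from its product in `Π`, so distinct reduced words give distinct elements. When `a, b` lie in
different orbits, the commutator of `z_a` and `z_b` is the product of the reduced word
`a b (τ a) (τ b)`, since `z_a⁻¹ = z_{τ a}`.
-/

/-- The group `Π` with generators `{z_a}_{a ∈ α}` and relations `z_a z_{τ a} = 1`. -/
abbrev PiGrp {α : Type} (τ : α → α) : Type :=
  PresentedGroup {x : FreeGroup α | ∃ a : α, x = FreeGroup.of a * FreeGroup.of (τ a)}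

/-- The generator `z_a` of `Π`. -/
def zgen {α : Type} (τ : α → α) (a : α) : PiGrp τ := PresentedGroup.of a

namespace PiGrp

variable {α : Type} {τ : α → α}

theorem zgen_mul_zgen_tau (a : α) : zgen τ a * zgen τ (τ a) = 1 :=
  PresentedGroup.one_of_mem ⟨a, rfl⟩

theorem inv_zgen (a : α) : (zgen τ a)⁻¹ = zgen τ (τ a) :=
  inv_eq_of_mul_eq_one_right (zgen_mul_zgen_tau a)

theorem zgen_commutator_eq_prod (a b : α) :
    zgen τ a * zgen τ b * (zgen τ a)⁻¹ * (zgen τ b)⁻¹ = ([a, b, τ a, τ b].map (zgen τ)).prod := by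
  simp [inv_zgen, mul_assoc]

abbrev IsReduced (τ : α → α) (l : List α) : Prop := l.IsChain (fun x y => y ≠ τ x)

abbrev ReducedWord (τ : α → α) : Type := {l : List α // IsReduced τ l}

theorem isReduced_commutator (hτ : Function.Involutive τ) {a b : α} (hab : b ≠ a ∧ b ≠ τ a) :
    IsReduced τ [a, b, τ a, τ b] := by
  have hab' : τ a ≠ τ b := fun h => hab.1 (hτ.injective h).symm
  have hba : τ b ≠ τ (τ a) := fun h => hab.2 (hτ.injective h)
  simp only [IsReduced, List.isChain_cons_cons, List.isChain_singleton]
  exact ⟨hab.2, hab', hba, trivial⟩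

namespace ReducedWord

open Classical in
noncomputable def cons (a : α) : ReducedWord τ → ReducedWord τ
  | ⟨[], _⟩ => ⟨[a], List.isChain_singleton a⟩
  | ⟨x :: t, h⟩ =>
    if hx : x = τ a then ⟨t, h.tail⟩ else ⟨a :: x :: t, List.isChain_cons_cons.2 ⟨hx, h⟩⟩

theorem cons_of_isReduced (a : α) (w : ReducedWord τ) (h : IsReduced τ (a :: w.1)) :
    cons a w = ⟨a :: w.1, h⟩ := by
  obtain ⟨_ | ⟨x, t⟩, hw⟩ := w
  · rfl
  · exact dif_neg (List.isChain_cons_cons.1 h).1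

theorem cons_tau_cons (hτ : Function.Involutive τ) (a : α) (w : ReducedWord τ) :
    cons (τ a) (cons a w) = w := by
  obtain ⟨_ | ⟨x, t⟩, hw⟩ := w
  · exact dif_pos (hτ a).symm
  by_cases hx : x = τ a
  · subst hx
    simp only [cons, dif_pos]
    exact cons_of_isReduced _ _ hw
  · simp only [cons, dif_neg hx]
    exact dif_pos (hτ a).symm

noncomputable def consPerm (hτ : Function.Involutive τ) (a : α) : Equiv.Perm (ReducedWord τ) where
  toFun := cons a
  invFun := cons (τ a)
  left_inv := cons_tau_cons hτ a
  right_inv w := by simpa only [hτ a] using cons_tau_cons hτ (τ a) w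

theorem consPerm_tau (hτ : Function.Involutive τ) (a : α) :
    consPerm hτ (τ a) = (consPerm hτ a)⁻¹ :=
  Equiv.ext fun _ => rfl

end ReducedWord

open ReducedWord

noncomputable def wordAction (hτ : Function.Involutive τ) : PiGrp τ →* Equiv.Perm (ReducedWord τ) :=
  PresentedGroup.toGroup (f := consPerm hτ) <| by
    rintro _ ⟨a, rfl⟩
    rw [map_mul, FreeGroup.lift_apply_of, FreeGroup.lift_apply_of, consPerm_tau, mul_inv_cancel]

theorem wordAction_prod_apply_nil (hτ : Function.Involutive τ) (l : List α)
    (hl : IsReduced τ l) :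
    wordAction hτ (l.map (zgen τ)).prod ⟨[], List.isChain_nil⟩ = ⟨l, hl⟩ := by
  induction l with
  | nil => rfl
  | cons a t ih =>
    rw [List.map_cons, List.prod_cons, map_mul, Equiv.Perm.mul_apply, ih hl.tail]
    exact cons_of_isReduced a _ hl

theorem prod_map_zgen_injective (hτ : Function.Involutive τ) {l l' : List α}
    (hl : IsReduced τ l) (hl' : IsReduced τ l')
    (h : (l.map (zgen τ)).prod = (l'.map (zgen τ)).prod) : l = l' := by
  have hact := wordAction_prod_apply_nil hτ l hl
  rw [h, wordAction_prod_apply_nil hτ l' hl'] at hact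
  exact congrArg Subtype.val hact.symm

end PiGrp

open PiGrp in
/-- If `a, b` lie in different orbits of `τ` and likewise `a', b'`,
and the commutators `z_a z_b z_a⁻¹ z_b⁻¹` and `z_{a'} z_{b'} z_{a'}⁻¹ z_{b'}⁻¹`
coincide in `Π`, then `a = a'` and `b = b'`. -/
theorem commutator_eq_iff {α : Type} (τ : α → α) (hτ : Function.Involutive τ)
    (a b a' b' : α)
    (hab : b ≠ a ∧ b ≠ τ a) (hab' : b' ≠ a' ∧ b' ≠ τ a')
    (h : zgen τ a * zgen τ b * (zgen τ a)⁻¹ * (zgen τ b)⁻¹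
        = zgen τ a' * zgen τ b' * (zgen τ a')⁻¹ * (zgen τ b')⁻¹) :
    a = a' ∧ b = b' := by
  rw [zgen_commutator_eq_prod, zgen_commutator_eq_prod] at h
  have hwords := prod_map_zgen_injective hτ (isReduced_commutator hτ hab)
    (isReduced_commutator hτ hab') h
  simp only [List.cons.injEq] at hwords
  exact ⟨hwords.1, hwords.2.1⟩
end

section
/- For a, b ∈ α lying in different orbits of the involution τ, the nanoword w_{a,b} = ABAB with |A| = a, |B| = b is not slice; moreover its length norm equals 2, i.e., any nanoword cobordant to w_{a,b} has length at least 4. -/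
section GamAux

variable {α : Type} {G : Type*} [Group G]

/-- The invariant: product of `g` over the α-values of the word. -/
def gam (g : α → G) (w : List (Letter α)) : G := (w.map fun p => g p.2).prod

lemma gam_append (g : α → G) (x y : List (Letter α)) :
    gam g (x ++ y) = gam g x * gam g y := by simp [gam]

lemma gam_pair (g : α → G) (A B : Letter α) :
    gam g [A, B] = g A.2 * g B.2 := by simp [gam]

lemma pal_prod {l : List G} (hpal : l.Palindrome) :
    (∀ x ∈ l, x * x = 1) → Even l.length → l.prod = 1 := by
  induction hpal with
  | nil => simp
  | singleton x => intro _ h; simp at h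
  | @cons_concat x l hp ih =>
      intro hsq hev
      have hl : l.prod = 1 := by
        refine ih (fun y hy => hsq y (by simp [hy])) ?_
        obtain ⟨k, hk⟩ := hev
        exact ⟨k - 1, by simp at hk ⊢; omega⟩
      have hx : x * x = 1 := hsq x (by simp)
      calc (x :: (l ++ [x])).prod = x * (l.prod * x) := by simp
        _ = 1 := by rw [hl, one_mul, hx]

lemma gam_sym {τ : α → α} (g : α → G) (hgτ : ∀ c, g (τ c) = g c)
    (hsq : ∀ c, g c * g c = 1) {vs : List (List (Letter α))}
    (hsym : IsSymPhrase τ vs) (heven : IsEvenPhrase vs) :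
    ∀ v ∈ vs, gam g v = 1 := by
  obtain ⟨ι, hmap, hval⟩ := hsym
  intro v hv
  have key : ∀ B ∈ v, g (ι B).2 = g B.2 := by
    intro B hB
    have hBf : B ∈ vs.flatten := List.mem_flatten.2 ⟨v, hv, hB⟩
    obtain ⟨h1, h2⟩ := hval B hBf
    by_cases hc : ∃ u ∈ vs, (u.filter fun q => q.1 == B.1).length = 2
    · rw [h1 hc]
    · rw [h2 hc, hgτ]
  have hpal : (v.map fun p => g p.2).reverse = v.map fun p => g p.2 := by
    rw [← List.map_reverse, ← hmap v hv, List.map_map]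
    exact List.map_congr_left fun B hB => key B hB
  refine pal_prod (List.Palindrome.of_reverse_eq hpal) ?_ ?_
  · intro x hx
    obtain ⟨B, _, rfl⟩ := List.mem_map.1 hx
    exact hsq _
  · simpa using heven v hv

lemma gam_splice (g : α → G) (xs : List (List (Letter α))) :
    ∀ vs : List (List (Letter α)), (∀ v ∈ vs, gam g v = 1) →
      gam g (splice xs vs) = gam g xs.flatten := by
  induction xs with
  | nil => intro vs _; cases vs <;> simp [splice, gam]
  | cons x xs ih =>
      intro vs hvs
      cases vs with
      | nil =>
          rw [splice, gam_append, ih [] (by simp), List.flatten_cons, gam_append]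
      | cons v vs =>
          rw [splice, List.flatten_cons, gam_append, gam_append, gam_append,
            hvs v (by simp), ih vs (fun u hu => hvs u (by simp [hu])), mul_one]

lemma gam_move {τ : α → α} (g : α → G) (hgτ : ∀ c, g (τ c) = g c)
    (hsq : ∀ c, g c * g c = 1) {w w' : List (Letter α)}
    (h : NanoMove τ w w') : gam g w = gam g w' := by
  induction h with
  | iso w f hf hw =>
      have : (w.map fun p => (f p.1, p.2)).map (fun p => g p.2)
          = w.map fun p => g p.2 := by rw [List.map_map]; rfl
      simp only [gam, this]
  | h1 x y A hw =>
      have h0 : gam g [A, A] = 1 := by rw [gam_pair, hsq]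
      simp only [gam_append, h0, one_mul, mul_one]
  | h2 x y z A B hAB hw =>
      have hB : g B.2 = g A.2 := by rw [hAB, hgτ]
      have h1 : gam g [A, B] = 1 := by rw [gam_pair, hB, hsq]
      have h2 : gam g [B, A] = 1 := by rw [gam_pair, hB, hsq]
      simp only [gam_append, h1, h2, one_mul, mul_one]
  | h3 x y z t A B C hAB hBC hw =>
      have hB : g B.2 = g A.2 := by rw [hAB]
      have hC : g C.2 = g A.2 := by rw [← hBC, hAB]
      have e1 : gam g [A, B] = 1 := by rw [gam_pair, hB, hsq]
      have e2 : gam g [A, C] = 1 := by rw [gam_pair, hC, hsq]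
      have e3 : gam g [B, C] = 1 := by rw [gam_pair, hB, hC, hsq]
      have e4 : gam g [B, A] = 1 := by rw [gam_pair, hB, hsq]
      have e5 : gam g [C, A] = 1 := by rw [gam_pair, hC, hsq]
      have e6 : gam g [C, B] = 1 := by rw [gam_pair, hC, hB, hsq]
      simp only [gam_append, e1, e2, e3, e4, e5, e6, one_mul, mul_one]
  | surgery xs vs hlen hsym heven hw =>
      exact gam_splice g xs vs (gam_sym g hgτ hsq hsym heven)

lemma gam_cob {τ : α → α} (g : α → G) (hgτ : ∀ c, g (τ c) = g c)
    (hsq : ∀ c, g c * g c = 1) {w w' : List (Letter α)}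
    (h : Cobordant τ w w') : gam g w = gam g w' := by
  induction h with
  | rel _ _ h => exact gam_move g hgτ hsq h
  | refl _ => rfl
  | symm _ _ _ ih => exact ih.symm
  | trans _ _ _ _ _ ih1 ih2 => exact ih1.trans ih2

end GamAux

lemma not_nanoword3 {α : Type} (p q r : Letter α) : ¬ IsNanoword [p, q, r] := by
  rintro ⟨h1, -⟩
  have hp := h1 p (by simp)
  have hq := h1 q (by simp)
  have hr := h1 r (by simp)
  simp only [List.filter_cons, List.filter_nil, beq_iff_eq] at hp hq hr
  by_cases e1 : q.1 = p.1
  · by_cases e2 : r.1 = p.1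
    · simp [e1, e2] at hp
    · have e3 : ¬ r.1 = q.1 := fun h => e2 (h.trans e1)
      have n1 : ¬ p.1 = r.1 := fun h => e2 h.symm
      have n2 : ¬ q.1 = r.1 := fun h => e3 h.symm
      simp [n1, n2] at hr
  · by_cases e2 : r.1 = p.1
    · have n1 : ¬ p.1 = q.1 := fun h => e1 h.symm
      have n2 : ¬ r.1 = q.1 := fun h => e1 (h.symm.trans e2)
      simp [n1, n2] at hq
    · simp [e1, e2] at hp

/-- For `a, b ∈ α` in different orbits of `τ`, the nanoword
`w_{a,b} = ABAB` with `|A| = a`, `|B| = b` is not slice, and its length norm is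
2: every nanoword cobordant to it has length at least 4. -/
theorem wab_not_slice {α : Type} (τ : α → α) (hτ : Function.Involutive τ)
    (a b : α) (hdiff : b ≠ a ∧ b ≠ τ a) :
    ¬ Cobordant τ [(0, a), (1, b), (0, a), (1, b)] [] ∧
      ∀ v : List (Letter α), IsNanoword v →
        Cobordant τ [(0, a), (1, b), (0, a), (1, b)] v → 4 ≤ v.length := by
  classical
  obtain ⟨hba, hbτa⟩ := hdiff
  -- the invariant target: permutations of Fin 3
  set s : Equiv.Perm (Fin 3) := Equiv.swap 0 1 with hs
  set t : Equiv.Perm (Fin 3) := Equiv.swap 1 2 with ht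
  set g : α → Equiv.Perm (Fin 3) :=
    fun c => if c = a ∨ c = τ a then s else if c = b ∨ c = τ b then t else 1 with hg
  have memτa : ∀ c, (τ c = a ∨ τ c = τ a) ↔ (c = a ∨ c = τ a) := by
    intro c
    constructor
    · rintro (h | h)
      · right; rw [← h, hτ]
      · left; exact hτ.injective h
    · rintro (h | h)
      · right; rw [h]
      · left; rw [h, hτ]
  have memτb : ∀ c, (τ c = b ∨ τ c = τ b) ↔ (c = b ∨ c = τ b) := by
    intro c
    constructor
    · rintro (h | h)
      · right; rw [← h, hτ]
      · left; exact hτ.injective h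
    · rintro (h | h)
      · right; rw [h]
      · left; rw [h, hτ]
  have hgτ : ∀ c, g (τ c) = g c := by
    intro c
    simp only [hg, memτa c, memτb c]
  have hsq : ∀ c, g c * g c = 1 := by
    intro c
    simp only [hg]
    split_ifs <;> simp [hs, ht, Equiv.swap_mul_self]
  have hga : g a = s := by simp [hg]
  have hgb : g b = t := by
    have hb1 : ¬(b = a ∨ b = τ a) := by tauto
    simp [hg, hb1]
  have hne : gam g [(0, a), (1, b), (0, a), (1, b)] ≠ 1 := by
    have : gam g [(0, a), (1, b), (0, a), (1, b)] = s * (t * (s * t)) := by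
      simp [gam, hga, hgb, mul_assoc]
    rw [this, hs, ht]
    decide
  have part1 : ¬ Cobordant τ [(0, a), (1, b), (0, a), (1, b)] [] := by
    intro h
    exact hne (by simpa [gam] using gam_cob g hgτ hsq h)
  refine ⟨part1, ?_⟩
  intro v hv hcob
  by_contra hlt
  push_neg at hlt
  match v, hv, hcob, hlt with
  | [], hv, hcob, hlt => exact part1 hcob
  | [p], hv, hcob, hlt =>
      have := hv.1 p (by simp)
      simp [List.filter] at this
  | [p, q], hv, hcob, hlt =>
      have hq1 : q.1 = p.1 := by
        by_contra hq1
        have := hv.1 p (by simp)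
        simp [List.filter_cons, hq1] at this
      have hq2 : q.2 = p.2 := hv.2 q (by simp) p (by simp) hq1
      have hqp : q = p := Prod.ext hq1 hq2
      subst hqp
      have mv : NanoMove τ [q, q] [] := by
        have := NanoMove.h1 (τ := τ) [] [] q (by simpa using hv)
        simpa using this
      exact part1 (Relation.EqvGen.trans _ _ _ hcob (Relation.EqvGen.rel _ _ mv))
  | [p, q, r], hv, hcob, hlt =>
      exact not_nanoword3 p q r hv
  | p :: q :: r :: u :: rest, hv, hcob, hlt => simp at hlt; omega
end

section
/- The φ-genus is subadditive under direct sum: for any α-pairings p₁, p₂, σ_φ(p₁) + σ_φ(p₂) ≥ σ_φ(p₁ ⊕ p₂). -/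
open scoped Classical

/-! α-pairings following Turaev: a finite set `S = S° ⊔ {s}` (here `S° = carrier`
and `s = none` in `Option carrier`), a projection `S° → α` and a pairing
`e : S × S → π` with values in a left `R`-module `π`. -/

/-- An `α`-pairing with values in the left `R`-module `π`. -/
structure APairing (α R π : Type) [Ring R] [AddCommGroup π] [Module R π] where
  /-- the set `S° = S ∖ {s}` -/
  carrier : Type
  [fintype : Fintype carrier]
  /-- the projection `S° → α` -/
  proj : carrier → α
  /-- the pairing `e : S × S → π`, where `none` plays the role of `s` -/
  pair : Option carrier → Option carrier → π

attribute [instance] APairing.fintype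

namespace APairing

variable {α R π : Type} [Ring R] [AddCommGroup π] [Module R π]

/-- The free `R`-module `RS` on `S`. -/
abbrev Vec (p : APairing α R π) : Type := Option p.carrier →₀ R

/-- The bilinear extension `ẽ : RS × RS → π` of the pairing. -/
def ext (p : APairing α R π) (x y : p.Vec) : π :=
  x.sum fun i r => y.sum fun j s => (r * s) • p.pair i j

/-- A short vector: an element `A ∈ S°`, or `A + B` with `|A| = |B|`, or `A - B`
with `|A| = τ(|B|)` (with `A ≠ B` in the latter two cases). -/
def Short (τ : α → α) (p : APairing α R π) (x : p.Vec) : Prop :=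
  (∃ A : p.carrier, x = Finsupp.single (some A) 1) ∨
  (∃ A B : p.carrier, A ≠ B ∧ p.proj A = p.proj B ∧
      x = Finsupp.single (some A) 1 + Finsupp.single (some B) 1) ∨
  (∃ A B : p.carrier, A ≠ B ∧ p.proj A = τ (p.proj B) ∧
      x = Finsupp.single (some A) 1 - Finsupp.single (some B) 1)

/-- A filling of `p`: a finite family of vectors, one equal to `s`, the others
short, such that every element of `S°` occurs with nonzero coefficient in
exactly one of them. -/
def IsFilling (τ : α → α) (p : APairing α R π) (F : Finset p.Vec) : Prop :=
  Finsupp.single none (1 : R) ∈ F ∧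
  (∀ x ∈ F, x ≠ Finsupp.single none (1 : R) → Short τ p x) ∧
  ∀ A : p.carrier, ∃! x, x ∈ F ∧ x (some A) ≠ 0

/-- The filling is annihilating: `ẽ(λᵢ, λⱼ) = 0` for all `i, j`. -/
def IsAnnihilating (p : APairing α R π) (F : Finset p.Vec) : Prop :=
  ∀ x ∈ F, ∀ y ∈ F, p.ext x y = 0

/-- A hyperbolic `α`-pairing: one possessing an annihilating filling. -/
def Hyperbolic (τ : α → α) (p : APairing α R π) : Prop :=
  ∃ F : Finset p.Vec, IsFilling τ p F ∧ IsAnnihilating p F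

/-- The opposite `α`-pairing `p⁻`, with pairing `-e`. -/
def opp (p : APairing α R π) : APairing α R π where
  carrier := p.carrier
  proj := p.proj
  pair i j := - p.pair i j

instance (p : APairing α R π) : Fintype p.opp.carrier :=
  inferInstanceAs (Fintype p.carrier)

/-- The sum `p ⊕ q` of `α`-pairings: `S° = S°₁ ⊔ S°₂` with `s ↦ s₁ + s₂`. -/
def dsum (p q : APairing α R π) : APairing α R π where
  carrier := p.carrier ⊕ q.carrier
  proj := Sum.elim p.proj q.proj
  pair i j :=
    match i, j with
    | none, none => p.pair none none + q.pair none none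
    | none, some (Sum.inl B) => p.pair none (some B)
    | none, some (Sum.inr B) => q.pair none (some B)
    | some (Sum.inl A), none => p.pair (some A) none
    | some (Sum.inr A), none => q.pair (some A) none
    | some (Sum.inl A), some (Sum.inl B) => p.pair (some A) (some B)
    | some (Sum.inr A), some (Sum.inr B) => q.pair (some A) (some B)
    | some (Sum.inl _), some (Sum.inr _) => 0
    | some (Sum.inr _), some (Sum.inl _) => 0

/-- Two `α`-pairings are cobordant if `p ⊕ q⁻` is hyperbolic. -/
def Cobordant (τ : α → α) (p q : APairing α R π) : Prop :=
  Hyperbolic τ (p.dsum q.opp)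

end APairing

open APairing
open scoped ENNReal

variable {α R π F : Type} [Ring R] [AddCommGroup π] [Module R π]
  [CommRing F] [IsDomain F] [Module R F]

/-- The matrix `(φ ẽ(λᵢ, λⱼ))_{i,j}` of a filling, with entries in the quotient
field of `F` (ranks are computed over the quotient field). -/
noncomputable def fillMatrix (φ : π →ₗ[R] F) (p : APairing α R π)
    (Fl : Finset p.Vec) : Matrix Fl Fl (FractionRing F) :=
  Matrix.of fun x y : Fl => algebraMap F (FractionRing F) (φ (p.ext x y))

/-- The `φ`-genus `σ_φ(p)`: the minimum over all fillings `λ` of `p` of half the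
rank of the matrix `(φ ẽ(λᵢ, λⱼ))`. -/
noncomputable def phiGenus (τ : α → α) (φ : π →ₗ[R] F) (p : APairing α R π) : ℝ≥0∞ :=
  ⨅ Fl : {Fl : Finset p.Vec // IsFilling τ p Fl},
    ((Matrix.rank (fillMatrix φ p Fl.1) : ℝ≥0∞) / 2)

/-! A filling of `p₁` and a filling of `p₂`, placed side by side in `S°₁ ⊔ S°₂` with `s₁` and
`s₂` both sent to `s = s₁ + s₂`, form a filling of `p₁ ⊕ p₂`. The pairing of `p₁ ⊕ p₂` is the
sum of the pairings of the restrictions of its arguments to `S₁` and to `S₂`, and the restriction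
to `S₁` of a vector of the new filling is a vector of the filling of `p₁` or `0` (a short vector
of `p₂` restricts to `0`, and `s` to `s₁`). So the new matrix is the sum of two matrices, each
obtained from one of the old matrices by repeating and zeroing rows and columns, and its rank is
at most the sum of the old ranks. -/

lemma Finset.existsUnique_mem_union_image {β γ δ : Type*} [DecidableEq δ] {L₁ : Finset β}
    {L₂ : Finset γ} {f : β → δ} {g : γ → δ} {P : δ → Prop} (h : ∃! b, b ∈ L₁ ∧ P (f b))
    (hg : ∀ c, ¬ P (g c)) : ∃! x, x ∈ L₁.image f ∪ L₂.image g ∧ P x := by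
  obtain ⟨b, ⟨hb, hPb⟩, huniq⟩ := h
  refine ⟨f b, ⟨Finset.mem_union_left _ (Finset.mem_image_of_mem f hb), hPb⟩, ?_⟩
  rintro x ⟨hx, hPx⟩
  rcases Finset.mem_union.1 hx with hx | hx
  · obtain ⟨b', hb', rfl⟩ := Finset.mem_image.1 hx
    rw [huniq b' ⟨hb', hPx⟩]
  · obtain ⟨c, -, rfl⟩ := Finset.mem_image.1 hx
    exact (hg c hPx).elim

namespace Matrix

variable {K : Type*} [Field K] {ι κ : Type*}

theorem rank_add_le [Fintype κ] (A B : Matrix ι κ K) : (A + B).rank ≤ A.rank + B.rank := by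
  rw [rank, rank, rank, mulVecLin_add]
  exact (Submodule.finrank_mono (LinearMap.range_add_le _ _)).trans
    (Submodule.finrank_add_le_finrank_add_finrank _ _)

theorem rank_diagonal_mul_submatrix_mul_diagonal_le [Fintype ι] [Fintype κ] [DecidableEq ι]
    (M : Matrix κ κ K) (g : ι → κ) (d : ι → K) :
    (diagonal d * M.submatrix g g * diagonal d).rank ≤ M.rank :=
  (rank_mul_le_left _ _).trans <| (rank_mul_le_right _ _).trans <| rank_submatrix_le _ _ _

end Matrix

namespace APairing

lemma ext_eq_sum (p : APairing α R π) (x y : p.Vec) :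
    p.ext x y = ∑ i, ∑ j, (x i * y j) • p.pair i j := by
  simp only [ext, Finsupp.sum_fintype, zero_mul, mul_zero, zero_smul, Finset.sum_const_zero,
    implies_true]

lemma ext_zero_left (p : APairing α R π) (y : p.Vec) : p.ext 0 y = 0 := by
  simp [ext_eq_sum]

lemma ext_zero_right (p : APairing α R π) (x : p.Vec) : p.ext x 0 = 0 := by
  simp [ext_eq_sum]

lemma Short.apply_none {τ : α → α} {p : APairing α R π} {x : p.Vec} (h : Short τ p x) :
    x none = 0 := by
  rcases h with ⟨A, rfl⟩ | ⟨A, B, -, -, rfl⟩ | ⟨A, B, -, -, rfl⟩ <;> simp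

lemma Short.embDomain {τ : α → α} {p q : APairing α R π} (f : p.carrier ↪ q.carrier)
    (hf : ∀ A, q.proj (f A) = p.proj A) {x : p.Vec} (h : Short τ p x) :
    Short τ q (x.embDomain f.optionMap) := by
  rcases h with ⟨A, rfl⟩ | ⟨A, B, hAB, hproj, rfl⟩ | ⟨A, B, hAB, hproj, rfl⟩
  · exact Or.inl ⟨f A, Finsupp.embDomain_single _ _ _⟩
  · refine Or.inr (Or.inl ⟨f A, f B, f.injective.ne hAB, by rw [hf, hf, hproj], ?_⟩)
    rw [Finsupp.embDomain_add, Finsupp.embDomain_single, Finsupp.embDomain_single]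
    rfl
  · refine Or.inr (Or.inr ⟨f A, f B, f.injective.ne hAB, by rw [hf, hf, hproj], ?_⟩)
    rw [← Finsupp.embDomain.addMonoidHom_apply, map_sub]
    simp only [Finsupp.embDomain.addMonoidHom_apply, Finsupp.embDomain_single]
    rfl

lemma IsFilling.apply_none_eq_zero_or_one {τ : α → α} {p : APairing α R π} {L : Finset p.Vec}
    (hL : IsFilling τ p L) {x : p.Vec} (hx : x ∈ L) : x none = 0 ∨ x none = 1 := by
  by_cases hs : x = Finsupp.single none 1
  · simp [hs]
  · exact Or.inl (hL.2.1 x hx hs).apply_none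

section dsum

variable (p q : APairing α R π)

noncomputable def inlVec (x : p.Vec) : (p.dsum q).Vec :=
  x.embDomain Function.Embedding.inl.optionMap

noncomputable def inrVec (y : q.Vec) : (p.dsum q).Vec :=
  y.embDomain Function.Embedding.inr.optionMap

noncomputable def fstVec (z : (p.dsum q).Vec) : p.Vec :=
  z.comapDomain _ Function.Embedding.inl.optionMap.injective.injOn

noncomputable def sndVec (z : (p.dsum q).Vec) : q.Vec :=
  z.comapDomain _ Function.Embedding.inr.optionMap.injective.injOn

@[simp] lemma fstVec_apply (z : (p.dsum q).Vec) (i : Option p.carrier) :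
    fstVec p q z i = z (i.map Sum.inl) := rfl

@[simp] lemma sndVec_apply (z : (p.dsum q).Vec) (i : Option q.carrier) :
    sndVec p q z i = z (i.map Sum.inr) := rfl

lemma sum_dsum_carrier {M : Type} [AddCommMonoid M] (f : (p.dsum q).carrier → M) :
    ∑ i, f i = ∑ a, f (Sum.inl a) + ∑ b, f (Sum.inr b) :=
  Fintype.sum_sum_type f

lemma ext_dsum (x y : (p.dsum q).Vec) :
    (p.dsum q).ext x y =
      p.ext (fstVec p q x) (fstVec p q y) + q.ext (sndVec p q x) (sndVec p q y) := by
  simp only [ext_eq_sum, Fintype.sum_option, sum_dsum_carrier, fstVec_apply, sndVec_apply]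
  simp [dsum, smul_add, Finset.sum_add_distrib]
  abel

@[simp] lemma inlVec_single_none (r : R) :
    inlVec p q (Finsupp.single none r) = Finsupp.single none r :=
  Finsupp.embDomain_single _ _ _

@[simp] lemma inrVec_single_none (r : R) :
    inrVec p q (Finsupp.single none r) = Finsupp.single none r :=
  Finsupp.embDomain_single _ _ _

@[simp] lemma fstVec_inlVec (x : p.Vec) : fstVec p q (inlVec p q x) = x :=
  Finsupp.comapDomain_embDomain _ _

@[simp] lemma sndVec_inrVec (y : q.Vec) : sndVec p q (inrVec p q y) = y :=
  Finsupp.comapDomain_embDomain _ _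

@[simp] lemma fstVec_inrVec (y : q.Vec) :
    fstVec p q (inrVec p q y) = Finsupp.single none (y none) := by
  ext (_ | A)
  · exact (Finsupp.embDomain_apply_self _ y none).trans Finsupp.single_eq_same.symm
  · exact (Finsupp.embDomain_of_notMem_range _ _ _ (by rintro ⟨_ | B, ⟨⟩⟩)).trans (by simp)

@[simp] lemma sndVec_inlVec (x : p.Vec) :
    sndVec p q (inlVec p q x) = Finsupp.single none (x none) := by
  ext (_ | A)
  · exact (Finsupp.embDomain_apply_self _ x none).trans Finsupp.single_eq_same.symm
  · exact (Finsupp.embDomain_of_notMem_range _ _ _ (by rintro ⟨_ | B, ⟨⟩⟩)).trans (by simp)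

end dsum

section filling

variable {τ : α → α} {p q : APairing α R π} {L₁ : Finset p.Vec} {L₂ : Finset q.Vec}

theorem IsFilling.dsum (hL₁ : IsFilling τ p L₁) (hL₂ : IsFilling τ q L₂) :
    IsFilling τ (p.dsum q) (L₁.image (inlVec p q) ∪ L₂.image (inrVec p q)) := by
  refine ⟨?_, ?_, ?_⟩
  · exact Finset.mem_union_left _ (Finset.mem_image.2 ⟨_, hL₁.1, inlVec_single_none p q 1⟩)
  · intro x hx hxs
    rcases Finset.mem_union.1 hx with hx | hx
    · obtain ⟨a, ha, rfl⟩ := Finset.mem_image.1 hx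
      have has : a ≠ Finsupp.single none 1 := by rintro rfl; exact hxs (inlVec_single_none p q 1)
      exact (hL₁.2.1 a ha has).embDomain _ fun _ => rfl
    · obtain ⟨c, hc, rfl⟩ := Finset.mem_image.1 hx
      have hcs : c ≠ Finsupp.single none 1 := by rintro rfl; exact hxs (inrVec_single_none p q 1)
      exact (hL₂.2.1 c hc hcs).embDomain _ fun _ => rfl
  · rintro (A | A)
    · exact Finset.existsUnique_mem_union_image (P := fun z => fstVec p q z (some A) ≠ 0)
        (by simpa using hL₁.2.2 A) (by simp)
    · rw [Finset.union_comm]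
      exact Finset.existsUnique_mem_union_image (P := fun z => sndVec p q z (some A) ≠ 0)
        (by simpa using hL₂.2.2 A) (by simp)

lemma fstVec_mem_or_eq_zero (hL₁ : IsFilling τ p L₁) (hL₂ : IsFilling τ q L₂)
    {z : (p.dsum q).Vec} (hz : z ∈ L₁.image (inlVec p q) ∪ L₂.image (inrVec p q)) :
    fstVec p q z ∈ L₁ ∨ fstVec p q z = 0 := by
  rcases Finset.mem_union.1 hz with hz | hz
  · obtain ⟨x, hx, rfl⟩ := Finset.mem_image.1 hz
    exact Or.inl (by simpa using hx)
  · obtain ⟨y, hy, rfl⟩ := Finset.mem_image.1 hz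
    rcases hL₂.apply_none_eq_zero_or_one hy with h | h <;> simp [h, hL₁.1]

lemma sndVec_mem_or_eq_zero (hL₁ : IsFilling τ p L₁) (hL₂ : IsFilling τ q L₂)
    {z : (p.dsum q).Vec} (hz : z ∈ L₁.image (inlVec p q) ∪ L₂.image (inrVec p q)) :
    sndVec p q z ∈ L₂ ∨ sndVec p q z = 0 := by
  rcases Finset.mem_union.1 hz with hz | hz
  · obtain ⟨x, hx, rfl⟩ := Finset.mem_image.1 hz
    rcases hL₁.apply_none_eq_zero_or_one hx with h | h <;> simp [h, hL₂.1]
  · obtain ⟨y, hy, rfl⟩ := Finset.mem_image.1 hz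
    exact Or.inl (by simpa using hy)

end filling

end APairing

noncomputable def gramMatrix (φ : π →ₗ[R] F) (p : APairing α R π) {ι : Type*}
    (v : ι → p.Vec) : Matrix ι ι (FractionRing F) :=
  Matrix.of fun i j => algebraMap F (FractionRing F) (φ (p.ext (v i) (v j)))

theorem rank_gramMatrix_le_rank_fillMatrix (φ : π →ₗ[R] F) {p : APairing α R π} {ι : Type*}
    [Fintype ι] {v : ι → p.Vec} {L : Finset p.Vec} (hv : ∀ i, v i ∈ L ∨ v i = 0) :
    (gramMatrix φ p v).rank ≤ (fillMatrix φ p L).rank := by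
  rcases L.eq_empty_or_nonempty with rfl | ⟨x₀, hx₀⟩
  · have hv0 : ∀ i, v i = 0 := fun i => (hv i).resolve_left (Finset.notMem_empty _)
    have hzero : gramMatrix φ p v = 0 := by
      ext i j
      simp [gramMatrix, hv0, ext_zero_left]
    simp [hzero]
  have hv' : ∀ i, v i ∉ L → v i = 0 := fun i => (hv i).resolve_left
  let g : ι → L := fun i => if h : v i ∈ L then ⟨v i, h⟩ else ⟨x₀, hx₀⟩
  let d : ι → FractionRing F := fun i => if v i ∈ L then 1 else 0
  have hfactor : gramMatrix φ p v =
      Matrix.diagonal d * (fillMatrix φ p L).submatrix g g * Matrix.diagonal d := by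
    ext i j
    by_cases hi : v i ∈ L
    · by_cases hj : v j ∈ L
      · simp [gramMatrix, fillMatrix, g, d, hi, hj]
      · have hdj : d j = 0 := if_neg hj
        simp [gramMatrix, hdj, hv' j hj, ext_zero_right]
    · have hdi : d i = 0 := if_neg hi
      simp [gramMatrix, hdi, hv' i hi, ext_zero_left]
  rw [hfactor]
  exact Matrix.rank_diagonal_mul_submatrix_mul_diagonal_le _ _ _

theorem rank_fillMatrix_dsum_le (φ : π →ₗ[R] F) {τ : α → α} {p q : APairing α R π}
    {L₁ : Finset p.Vec} {L₂ : Finset q.Vec} (hL₁ : IsFilling τ p L₁) (hL₂ : IsFilling τ q L₂) :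
    (fillMatrix φ (p.dsum q) (L₁.image (inlVec p q) ∪ L₂.image (inrVec p q))).rank ≤
      (fillMatrix φ p L₁).rank + (fillMatrix φ q L₂).rank := by
  set L := L₁.image (inlVec p q) ∪ L₂.image (inrVec p q)
  have hsplit : fillMatrix φ (p.dsum q) L =
      gramMatrix φ p (fun z : L => fstVec p q z) +
        gramMatrix φ q (fun z : L => sndVec p q z) := by
    ext z w
    simp [fillMatrix, gramMatrix, ext_dsum]
  rw [hsplit]
  exact (Matrix.rank_add_le _ _).trans (add_le_add
    (rank_gramMatrix_le_rank_fillMatrix φ fun z => fstVec_mem_or_eq_zero hL₁ hL₂ z.2)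
    (rank_gramMatrix_le_rank_fillMatrix φ fun z => sndVec_mem_or_eq_zero hL₁ hL₂ z.2))

/-- The `φ`-genus is subadditive:
`σ_φ(p₁) + σ_φ(p₂) ≥ σ_φ(p₁ ⊕ p₂)`. -/
theorem phiGenus_subadditive (τ : α → α) (φ : π →ₗ[R] F)
    (p₁ p₂ : APairing α R π) :
    phiGenus τ φ p₁ + phiGenus τ φ p₂ ≥ phiGenus τ φ (p₁.dsum p₂) := by
  unfold phiGenus
  rw [ge_iff_le, ENNReal.iInf_add]
  refine le_iInf fun L₁ => ?_
  rw [ENNReal.add_iInf]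
  refine le_iInf fun L₂ => (iInf_le _ ⟨_, L₁.2.dsum L₂.2⟩).trans ?_
  rw [← ENNReal.add_div]
  gcongr
  exact_mod_cast rank_fillMatrix_dsum_le φ L₁.2 L₂.2
end

section
/- If the involution τ: α → α is fixed-point-free, then every symmetric nanophrase over α is even, i.e., each of its constituent words has even length. -/
/-!
An odd word `a ++ m :: b` with `|a| = |b|` has the middle letter `m`, and `ι ∘ v = v⁻` forces
`ι m = m`. If both occurrences of `m` lie in `v`, the reflection of `v` swaps the occurrences of
`m` in `a` with those in `b` and keeps the middle one, so `m` occurs an odd number of times in `v`,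
not twice. Otherwise `m` has its second occurrence in another word, and then `τ |m| = |ι m| = |m|`.
-/

namespace List

variable {β : Type*}

theorem exists_eq_append_cons_of_odd_length {l : List β} (hl : Odd l.length) :
    ∃ a m b, l = a ++ m :: b ∧ a.length = b.length := by
  obtain ⟨n, hn⟩ := hl
  refine ⟨l.take n, l[n], l.drop (n + 1), ?_, ?_⟩
  · rw [← drop_eq_getElem_cons, take_append_drop]
  · simp only [length_take, length_drop]
    omega

theorem map_eq_reverse_append_cons {f : β → β} {a b : List β} {m : β}
    (hab : a.length = b.length) (h : (a ++ m :: b).map f = (a ++ m :: b).reverse) :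
    a.map f = b.reverse ∧ f m = m ∧ b.map f = a.reverse := by
  simp only [map_append, map_cons, reverse_append, reverse_cons, append_assoc,
    singleton_append] at h
  obtain ⟨ha, hmb⟩ := append_inj h (by simp [hab])
  obtain ⟨hm, hb⟩ := cons.inj hmb
  exact ⟨ha, hm, hb⟩

theorem odd_countP_of_map_eq_reverse {f : β → β} {p : β → Bool} {a b : List β} {m : β}
    (hab : a.length = b.length) (h : (a ++ m :: b).map f = (a ++ m :: b).reverse)
    (hp : ∀ x ∈ a ++ b, p x → p (f x)) (hm : p m) :
    Odd ((a ++ m :: b).countP p) := by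
  obtain ⟨ha, -, hb⟩ := map_eq_reverse_append_cons hab h
  have hab' : a.countP p ≤ b.countP p := calc
    a.countP p ≤ a.countP (p ∘ f) := countP_mono_left fun x hx => hp x (mem_append_left b hx)
    _ = b.countP p := by rw [← countP_map, ha, countP_reverse]
  have hba : b.countP p ≤ a.countP p := calc
    b.countP p ≤ b.countP (p ∘ f) := countP_mono_left fun x hx => hp x (mem_append_right a hx)
    _ = a.countP p := by rw [← countP_map, hb, countP_reverse]
  rw [countP_append, countP_cons, if_pos hm]
  exact ⟨a.countP p, by omega⟩

theorem countP_eq_zero_of_countP_flatten_le {p : β → Bool} {L : List (List β)} {v w : List β}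
    (hv : v ∈ L) (hw : w ∈ L) (hne : v ≠ w) (h : L.flatten.countP p ≤ w.countP p) :
    v.countP p = 0 := by
  obtain ⟨l₁, l₂, rfl⟩ := append_of_mem hw
  have hv' : v ∈ l₁ ++ l₂ := by simpa [hne] using hv
  have hle : v.countP p ≤ (l₁.map (countP p)).sum + (l₂.map (countP p)).sum := by
    rcases mem_append.1 hv' with hv₁ | hv₂
    · exact (le_sum_of_mem (mem_map_of_mem hv₁)).trans (Nat.le_add_right _ _)
    · exact (le_sum_of_mem (mem_map_of_mem hv₂)).trans (Nat.le_add_left _ _)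
  simp only [countP_flatten, map_append, map_cons, sum_append, sum_cons] at h
  omega

end List

theorem IsNanoword.eq_of_fst_eq {α : Type} {w : List (Letter α)} (hw : IsNanoword w)
    {p q : Letter α} (hp : p ∈ w) (hq : q ∈ w) (h : p.1 = q.1) : p = q :=
  Prod.ext h (hw.2 p hp q hq h)

theorem symPhrase_even_of_fixedPointFree_general {α : Type} (τ : α → α)
    (hfree : ∀ a : α, τ a ≠ a)
    (vs : List (List (Letter α))) (hnano : IsNanoword vs.flatten)
    (hsym : IsSymPhrase τ vs) :
    ∀ v ∈ vs, Even v.length := by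
  intro v hv
  by_contra hodd
  obtain ⟨ι, hrev, hval⟩ := hsym
  obtain ⟨a, m, b, rfl, hab⟩ :=
    List.exists_eq_append_cons_of_odd_length (Nat.not_even_iff_odd.1 hodd)
  have hfix : ι m = m := (List.map_eq_reverse_append_cons hab (hrev _ hv)).2.1
  have hm : m ∈ vs.flatten := List.mem_flatten.2 ⟨_, hv, by simp⟩
  simp only [← List.countP_eq_length_filter] at hval
  by_cases hsame : ∃ v' ∈ vs, v'.countP (fun q => q.1 == m.1) = 2
  · obtain ⟨v', hv', htwo⟩ := hsame
    have hvodd : Odd ((a ++ m :: b).countP fun q => q.1 == m.1) := by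
      refine List.odd_countP_of_map_eq_reverse hab (hrev _ hv) (fun x hx hxm => ?_) (by simp)
      have hxv : x ∈ a ++ m :: b := ((List.sublist_cons_self m b).append_left a).subset hx
      rw [hnano.eq_of_fst_eq (List.mem_flatten.2 ⟨_, hv, hxv⟩) hm (by simpa using hxm), hfix]
      simp
    have hne : a ++ m :: b ≠ v' := by
      rintro rfl
      rw [htwo] at hvodd
      exact Nat.not_odd_iff_even.2 even_two hvodd
    have hzero := List.countP_eq_zero_of_countP_flatten_le hv hv' hne
      (by rw [htwo, List.countP_eq_length_filter, hnano.1 m hm])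
    rw [hzero] at hvodd
    exact Nat.not_odd_zero hvodd
  · exact hfree m.2 (by simpa [hfix] using ((hval m hm).2 hsame).symm)

/-- If the involution `τ` is fixed-point-free, then every
symmetric nanophrase over `α` is even. -/
theorem symPhrase_even_of_fixedPointFree {α : Type} (τ : α → α)
    (hτ : Function.Involutive τ) (hfree : ∀ a : α, τ a ≠ a)
    (vs : List (List (Letter α))) (hnano : IsNanoword vs.flatten)
    (hsym : IsSymPhrase τ vs) :
    ∀ v ∈ vs, Even v.length :=
  symPhrase_even_of_fixedPointFree_general τ hfree vs hnano hsym
end
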